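/- Let ε > 0, let u : ℤ³ → ℝ be any function, and define τ : ℤ³ → ℝ pointwise by τ = e^{u/ε}. Then at every lattice point the pointwise identity ε·[Δ₁(e^{Δ₃u} − e^{Δ₂u}) + Δ₂(e^{Δ₁u} − e^{Δ₃u}) + Δ₃(e^{Δ₂u} − e^{Δ₁u})] = (T₁₃τ − T₁₂τ)/T₁τ + (T₁₂τ − T₂₃τ)/T₂τ + (T₂₃τ − T₁₃τ)/T₃τ holds. In particular, the discrete conservation law on the left vanishes at a point if and only if τ satisfies the lattice mKP equation (T₁₃τ − T₁₂τ)/T₁τ + (T₁₂τ − T₂₃τ)/T₂τ + (T₂₃τ − T₁₃τ)/T₃τ = 0 at that point. -/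

import Mathlib

/-! Since `τ = e^{u/ε}`, each `e^{Δᵢu}` is the ratio `Tᵢτ/τ`, and `ε Δᵢ` is just `Tᵢ - 1`.
Hence `ε Δ₁(e^{Δ₃u} − e^{Δ₂u}) = (T₁₃τ − T₁₂τ)/T₁τ − (T₃τ − T₂τ)/τ`, and in the cyclic sum the
three terms over `τ` cancel, leaving the lattice mKP expression. -/

noncomputable section

/-- Forward shift in the first lattice direction. -/
def T1 (v : ℤ × ℤ × ℤ → ℝ) : ℤ × ℤ × ℤ → ℝ := fun p => v (p.1 + 1, p.2.1, p.2.2)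

/-- Forward shift in the second lattice direction. -/
def T2 (v : ℤ × ℤ × ℤ → ℝ) : ℤ × ℤ × ℤ → ℝ := fun p => v (p.1, p.2.1 + 1, p.2.2)

/-- Forward shift in the third lattice direction. -/
def T3 (v : ℤ × ℤ × ℤ → ℝ) : ℤ × ℤ × ℤ → ℝ := fun p => v (p.1, p.2.1, p.2.2 + 1)

/-- Discrete derivative `Δ₁ = (T₁ - 1)/ε`. -/
def D1 (ε : ℝ) (v : ℤ × ℤ × ℤ → ℝ) : ℤ × ℤ × ℤ → ℝ := fun p => (T1 v p - v p) / ε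

/-- Discrete derivative `Δ₂ = (T₂ - 1)/ε`. -/
def D2 (ε : ℝ) (v : ℤ × ℤ × ℤ → ℝ) : ℤ × ℤ × ℤ → ℝ := fun p => (T2 v p - v p) / ε

/-- Discrete derivative `Δ₃ = (T₃ - 1)/ε`. -/
def D3 (ε : ℝ) (v : ℤ × ℤ × ℤ → ℝ) : ℤ × ℤ × ℤ → ℝ := fun p => (T3 v p - v p) / ε

section

variable {ε : ℝ} {u τ : ℤ × ℤ × ℤ → ℝ}

lemma exp_sub_div_eq_div (hτ : ∀ p, τ p = Real.exp (u p / ε)) (q q' : ℤ × ℤ × ℤ) :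
    Real.exp ((u q' - u q) / ε) = τ q' / τ q := by
  rw [hτ, hτ, sub_div, Real.exp_sub]

lemma exp_D1 (hτ : ∀ p, τ p = Real.exp (u p / ε)) (q : ℤ × ℤ × ℤ) :
    Real.exp (D1 ε u q) = T1 τ q / τ q :=
  exp_sub_div_eq_div hτ _ _

lemma exp_D2 (hτ : ∀ p, τ p = Real.exp (u p / ε)) (q : ℤ × ℤ × ℤ) :
    Real.exp (D2 ε u q) = T2 τ q / τ q :=
  exp_sub_div_eq_div hτ _ _

lemma exp_D3 (hτ : ∀ p, τ p = Real.exp (u p / ε)) (q : ℤ × ℤ × ℤ) :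
    Real.exp (D3 ε u q) = T3 τ q / τ q :=
  exp_sub_div_eq_div hτ _ _

lemma mul_D1 (hε : ε ≠ 0) (v : ℤ × ℤ × ℤ → ℝ) (p : ℤ × ℤ × ℤ) : ε * D1 ε v p = T1 v p - v p :=
  mul_div_cancel₀ _ hε

lemma mul_D2 (hε : ε ≠ 0) (v : ℤ × ℤ × ℤ → ℝ) (p : ℤ × ℤ × ℤ) : ε * D2 ε v p = T2 v p - v p :=
  mul_div_cancel₀ _ hε

lemma mul_D3 (hε : ε ≠ 0) (v : ℤ × ℤ × ℤ → ℝ) (p : ℤ × ℤ × ℤ) : ε * D3 ε v p = T3 v p - v p :=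
  mul_div_cancel₀ _ hε

theorem mul_conservationLaw_eq_mKP (hε : ε ≠ 0) (hτ : ∀ p, τ p = Real.exp (u p / ε))
    (p : ℤ × ℤ × ℤ) :
    ε * (D1 ε (fun q => Real.exp (D3 ε u q) - Real.exp (D2 ε u q)) p
        + D2 ε (fun q => Real.exp (D1 ε u q) - Real.exp (D3 ε u q)) p
        + D3 ε (fun q => Real.exp (D2 ε u q) - Real.exp (D1 ε u q)) p)
      = (T1 (T3 τ) p - T1 (T2 τ) p) / T1 τ p
        + (T1 (T2 τ) p - T2 (T3 τ) p) / T2 τ p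
        + (T2 (T3 τ) p - T1 (T3 τ) p) / T3 τ p := by
  simp only [exp_D1 hτ, exp_D2 hτ, exp_D3 hτ, mul_add, mul_D1 hε, mul_D2 hε, mul_D3 hε]
  simp only [T1, T2, T3]
  ring

end

/-- With `τ = e^{u/ε}`, the discrete conservation law
`Δ₁(e^{Δ₃u} − e^{Δ₂u}) + Δ₂(e^{Δ₁u} − e^{Δ₃u}) + Δ₃(e^{Δ₂u} − e^{Δ₁u}) = 0` is,
up to the factor `1/ε`, the lattice mKP equation
`(T₁₃τ − T₁₂τ)/T₁τ + (T₁₂τ − T₂₃τ)/T₂τ + (T₂₃τ − T₁₃τ)/T₃τ = 0`. -/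
theorem lattice_mKP_conservation (ε : ℝ) (hε : 0 < ε) (u : ℤ × ℤ × ℤ → ℝ)
    (τ : ℤ × ℤ × ℤ → ℝ) (hτ : ∀ p, τ p = Real.exp (u p / ε)) (p : ℤ × ℤ × ℤ) :
    (ε * (D1 ε (fun q => Real.exp (D3 ε u q) - Real.exp (D2 ε u q)) p
        + D2 ε (fun q => Real.exp (D1 ε u q) - Real.exp (D3 ε u q)) p
        + D3 ε (fun q => Real.exp (D2 ε u q) - Real.exp (D1 ε u q)) p)
      = (T1 (T3 τ) p - T1 (T2 τ) p) / T1 τ p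
        + (T1 (T2 τ) p - T2 (T3 τ) p) / T2 τ p
        + (T2 (T3 τ) p - T1 (T3 τ) p) / T3 τ p)
    ∧ (D1 ε (fun q => Real.exp (D3 ε u q) - Real.exp (D2 ε u q)) p
        + D2 ε (fun q => Real.exp (D1 ε u q) - Real.exp (D3 ε u q)) p
        + D3 ε (fun q => Real.exp (D2 ε u q) - Real.exp (D1 ε u q)) p = 0
      ↔ (T1 (T3 τ) p - T1 (T2 τ) p) / T1 τ p
        + (T1 (T2 τ) p - T2 (T3 τ) p) / T2 τ p
        + (T2 (T3 τ) p - T1 (T3 τ) p) / T3 τ p = 0) := by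
  have key := mul_conservationLaw_eq_mKP hε.ne' hτ p
  refine ⟨key, ?_⟩
  rw [← key, mul_eq_zero, or_iff_right hε.ne']
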